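/- Let G be a tree grammar with finitely many nonterminals and finitely many rules, and cost function with cost(r) > 0 for every rule r. Let p be a program generated from a nonterminal X, let n be a node of the derivation tree of p, and let Y be the left-hand nonterminal of the rule labeling n, so that the subprogram p_n is generated from Y. If p_n has a successor wrt Y, then p has a successor wrt X, and cost-succ_X(p) − cost(p) ≤ cost-succ_Y(p_n) − cost(p_n). -/

import Mathlib

/-- Finitely-branching trees with nodes labeled by elements of `R` (derivation trees). -/
inductive Tree' (R : Type) : Type
  | node : R → List (Tree' R) → Tree' R

/-- The label of the root node. -/
def Tree'.rootLabel {R : Type} : Tree' R → R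
  | .node r _ => r

/-- A tree grammar: nonterminals `Γ`, derivation rules `R`, each rule having a
left-hand nonterminal and a list of argument nonterminals. -/
structure TreeGrammar where
  Γ : Type
  R : Type
  lhs : R → Γ
  args : R → List Γ

/-- Well-formed derivation trees (programs) of a tree grammar. -/
inductive TreeGrammar.WF (G : TreeGrammar) : Tree' G.R → Prop
  | node (r : G.R) (ts : List (Tree' G.R))
      (hlen : ts.length = (G.args r).length)
      (hwf : ∀ t ∈ ts, G.WF t)
      (hlhs : ∀ i : ℕ, (h : i < ts.length) →
        G.lhs (ts[i].rootLabel) = (G.args r)[i]'(hlen ▸ h)) :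
      G.WF (Tree'.node r ts)

/-- `p` is a program generated from the nonterminal `X`. -/
def TreeGrammar.GenFrom (G : TreeGrammar) (X : G.Γ) (p : Tree' G.R) : Prop :=
  G.WF p ∧ G.lhs p.rootLabel = X

/-- The cost of a program, extending a cost function on rules. -/
def costP {R : Type} (cost : R → ℝ) : Tree' R → ℝ
  | .node r ts => cost r + (ts.attach.map (fun t => costP cost t.1)).sum
decreasing_by
  have := List.sizeOf_lt_of_mem t.2
  simp only [Tree'.node.sizeOf_spec]
  omega

/-- The number of nodes of a derivation tree. -/
def sizeP {R : Type} : Tree' R → ℕ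
  | .node _ ts => 1 + (ts.attach.map (fun t => sizeP t.1)).sum
decreasing_by
  have := List.sizeOf_lt_of_mem t.2
  simp only [Tree'.node.sizeOf_spec]
  omega

/-- The depth of a derivation tree: number of nodes on a longest root-to-leaf path. -/
def depthP {R : Type} : Tree' R → ℕ
  | .node _ ts => 1 + (ts.attach.map (fun t => depthP t.1)).foldr max 0
decreasing_by
  have := List.sizeOf_lt_of_mem t.2
  simp only [Tree'.node.sizeOf_spec]
  omega

/-- `p'` is a successor of `p` with respect to the nonterminal `X`:
`p'` is generated from `X`, has strictly larger cost than `p`, and no program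
generated from `X` has cost strictly between the two. -/
def IsSucc (G : TreeGrammar) (cost : G.R → ℝ) (X : G.Γ) (p p' : Tree' G.R) : Prop :=
  G.GenFrom X p' ∧ costP cost p < costP cost p' ∧
    ∀ p'', G.GenFrom X p'' →
      ¬(costP cost p < costP cost p'' ∧ costP cost p'' < costP cost p')

/-- `X` occurs as the left-hand nonterminal of the rule labeling some node of the tree. -/
inductive OccursLhs (G : TreeGrammar) (X : G.Γ) : Tree' G.R → Prop
  | here (r : G.R) (ts : List (Tree' G.R)) : G.lhs r = X → OccursLhs G X (.node r ts)
  | there (r : G.R) (ts : List (Tree' G.R)) (t : Tree' G.R) :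
      t ∈ ts → OccursLhs G X t → OccursLhs G X (.node r ts)

/-- Condition (*): along every root-to-leaf path, no nonterminal occurs twice as the
left-hand nonterminal of the rules labeling the nodes on the path. -/
inductive StarCond (G : TreeGrammar) : Tree' G.R → Prop
  | node (r : G.R) (ts : List (Tree' G.R))
      (hsub : ∀ t ∈ ts, StarCond G t)
      (hnew : ∀ t ∈ ts, ¬ OccursLhs G (G.lhs r) t) :
      StarCond G (.node r ts)

/-- `IsSubtree s t`: `s` is the subtree of `t` rooted at some node of `t`. -/
inductive IsSubtree {R : Type} : Tree' R → Tree' R → Prop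
  | refl (t : Tree' R) : IsSubtree t t
  | child (s : Tree' R) (r : R) (ts : List (Tree' R)) (t : Tree' R) :
      t ∈ ts → IsSubtree s t → IsSubtree s (.node r ts)

/-- `IsStrictSubtree s t`: `s` is the subtree of `t` rooted at a strict descendant
of the root of `t`. -/
inductive IsStrictSubtree {R : Type} : Tree' R → Tree' R → Prop
  | child (s : Tree' R) (r : R) (ts : List (Tree' R)) (t : Tree' R) :
      t ∈ ts → IsSubtree s t → IsStrictSubtree s (.node r ts)

/-- The subtree of a tree at a given position (a list of child indices), if it exists. -/
def subtreeAt {R : Type} : Tree' R → List ℕ → Option (Tree' R)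
  | t, [] => some t
  | .node _ ts, i :: is =>
      match ts[i]? with
      | some t => subtreeAt t is
      | none => none

/-- Replacing the subtree at a given position by `q`. -/
def replaceAt {R : Type} : Tree' R → List ℕ → Tree' R → Tree' R
  | _, [], q => q
  | .node r ts, i :: is, q =>
      match ts[i]? with
      | some t => .node r (ts.set i (replaceAt t is q))
      | none => .node r ts

open scoped ENNReal in
/-- The Bellman operator associated with a tree grammar and a cost function. -/
noncomputable def bellman (G : TreeGrammar) (cost : G.R → ℝ) (c : G.Γ → ℝ≥0∞) : G.Γ → ℝ≥0∞ :=
  fun X => ⨅ r ∈ {r : G.R | G.lhs r = X},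
    (ENNReal.ofReal (cost r) + ((G.args r).map c).sum)

/-
Replacing the subprogram `pn` of `p` by a successor `pn'` yields a program generated from `X`
whose cost exceeds that of `p` by exactly `cost pn' - cost pn`. Since rule costs are positive
and there are finitely many rules, only finitely many programs lie below any cost bound, so
among the programs generated from `X` that are more expensive than `p` there is a cheapest
one: a successor of `p`, whose cost is at most that of the replaced program.
-/

@[elab_as_elim]
theorem Tree'.induction {R : Type} {motive : Tree' R → Prop}
    (node : ∀ r ts, (∀ t ∈ ts, motive t) → motive (.node r ts)) : ∀ t, motive t
  | .node r ts => node r ts fun t _ => Tree'.induction node t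
decreasing_by
  have := List.sizeOf_lt_of_mem ‹t ∈ ts›
  simp only [Tree'.node.sizeOf_spec]
  omega

theorem Set.Finite.setOf_length_le_forall_mem {α : Type*} {S : Set α} (hS : S.Finite) (N : ℕ) :
    {l : List α | l.length ≤ N ∧ ∀ a ∈ l, a ∈ S}.Finite := by
  have := hS.to_subtype
  refine ((List.finite_length_le S N).image (List.map Subtype.val)).subset ?_
  rintro l ⟨hlen, hmem⟩
  lift l to List S using hmem
  exact ⟨l, by simpa using hlen, rfl⟩

section Trees

variable {R : Type}

theorem costP_node (cost : R → ℝ) (r : R) (ts : List (Tree' R)) :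
    costP cost (.node r ts) = cost r + (ts.map (costP cost)).sum := by
  rw [costP, List.attach_map_val]

theorem costP_node_set (cost : R → ℝ) (r : R) {ts : List (Tree' R)} {i : ℕ}
    (hi : i < ts.length) (t : Tree' R) :
    costP cost (.node r (ts.set i t)) =
      costP cost (.node r ts) - costP cost ts[i] + costP cost t := by
  simp only [costP_node, List.map_set, List.sum_set', List.length_map, hi, dif_pos,
    List.getElem_map]
  ring

theorem sizeP_node (r : R) (ts : List (Tree' R)) :
    sizeP (.node r ts) = 1 + (ts.map sizeP).sum := by
  rw [sizeP, List.attach_map_val]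

theorem sizeP_pos (t : Tree' R) : 0 < sizeP t := by
  cases t
  rw [sizeP_node]
  omega

theorem sizeP_lt_of_mem {r : R} {ts : List (Tree' R)} {t : Tree' R} (ht : t ∈ ts) :
    sizeP t < sizeP (.node r ts) := by
  rw [sizeP_node]
  have := List.le_sum_of_mem (List.mem_map_of_mem (f := sizeP) ht)
  omega

theorem length_lt_sizeP (r : R) (ts : List (Tree' R)) : ts.length < sizeP (.node r ts) := by
  rw [sizeP_node]
  have := List.length_le_sum_of_one_le (ts.map sizeP) (by
    simp only [List.mem_map]
    rintro _ ⟨t, -, rfl⟩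
    exact sizeP_pos t)
  simp only [List.length_map] at this
  omega

theorem mul_sizeP_le_costP (cost : R → ℝ) {δ : ℝ} (hδ : ∀ r, δ ≤ cost r)
    (t : Tree' R) :
    δ * sizeP t ≤ costP cost t := by
  induction t using Tree'.induction with
  | node r ts ih =>
    rw [costP_node, sizeP_node, Nat.cast_add, Nat.cast_one, mul_add, mul_one, Nat.cast_list_sum,
      List.map_map, ← List.sum_map_mul_left]
    exact add_le_add (hδ r) (List.sum_le_sum ih)

theorem finite_setOf_sizeP_le [Finite R] (N : ℕ) : {t : Tree' R | sizeP t ≤ N}.Finite := by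
  induction N with
  | zero => exact Set.finite_empty.subset fun t ht => (sizeP_pos t).not_ge ht
  | succ N ih =>
    refine (Set.finite_univ.image2 Tree'.node (ih.setOf_length_le_forall_mem N)).subset ?_
    rintro ⟨r, ts⟩ (ht : sizeP _ ≤ N + 1)
    refine ⟨r, trivial, ts, ⟨?_, fun t hts => ?_⟩, rfl⟩
    · have := length_lt_sizeP r ts
      omega
    · have := sizeP_lt_of_mem (r := r) hts
      show sizeP t ≤ N
      omega

theorem exists_pos_forall_le_of_finite [Finite R] {cost : R → ℝ} (hpos : ∀ r, 0 < cost r) :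
    ∃ δ > 0, ∀ r, δ ≤ cost r := by
  cases isEmpty_or_nonempty R
  · exact ⟨1, one_pos, isEmptyElim⟩
  · obtain ⟨r₀, hr₀⟩ := Finite.exists_min cost
    exact ⟨cost r₀, hpos r₀, hr₀⟩

theorem finite_setOf_costP_le [Finite R] {cost : R → ℝ} (hpos : ∀ r, 0 < cost r) (c : ℝ) :
    {t : Tree' R | costP cost t ≤ c}.Finite := by
  obtain ⟨δ, hδ, hδle⟩ := exists_pos_forall_le_of_finite hpos
  refine (finite_setOf_sizeP_le ⌈c / δ⌉₊).subset fun t ht => ?_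
  have : (sizeP t : ℝ) ≤ c / δ := by
    rw [le_div_iff₀ hδ, mul_comm]
    exact (mul_sizeP_le_costP cost hδle t).trans ht
  exact Nat.cast_le.1 (this.trans (Nat.le_ceil _))

end Trees

section Grammar

variable {G : TreeGrammar} {cost : G.R → ℝ} {X : G.Γ}

theorem TreeGrammar.WF.node_set {r : G.R} {ts : List (Tree' G.R)} (h : G.WF (.node r ts))
    {i : ℕ} (hi : i < ts.length) {t : Tree' G.R} (ht : G.WF t)
    (hlhs : G.lhs t.rootLabel = G.lhs ts[i].rootLabel) : G.WF (.node r (ts.set i t)) := by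
  cases h with
  | node _ _ hlen hwf hlhs' =>
    refine .node r _ (by simpa using hlen) (fun t' ht' => ?_) fun j hj => ?_
    · rcases List.mem_or_eq_of_mem_set ht' with h | rfl
      exacts [hwf t' h, ht]
    · rw [List.getElem_set]
      split
      · subst_vars
        exact hlhs.trans (hlhs' _ hi)
      · exact hlhs' j (by simpa using hj)

theorem IsSubtree.exists_replace (cost : G.R → ℝ) {s t : Tree' G.R} (hst : IsSubtree s t)
    (ht : G.GenFrom X t) {s' : Tree' G.R} (hs' : G.GenFrom (G.lhs s.rootLabel) s') :
    ∃ t', G.GenFrom X t' ∧ costP cost t' = costP cost t - costP cost s + costP cost s' := by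
  induction hst generalizing X with
  | refl => exact ⟨s', ⟨hs'.1, hs'.2.trans ht.2⟩, by ring⟩
  | child r ts u hu _ ih =>
    obtain ⟨i, hi, rfl⟩ := List.getElem_of_mem hu
    have hwf : G.WF ts[i] := by
      cases ht.1 with
      | node _ _ _ hwf _ => exact hwf _ hu
    obtain ⟨u', hu', hcost⟩ := ih ⟨hwf, rfl⟩
    refine ⟨.node r (ts.set i u'), ⟨ht.1.node_set hi hu'.1 hu'.2, ht.2⟩, ?_⟩
    rw [costP_node_set cost r hi, hcost]
    ring

theorem IsSucc.costP_le {p p' q : Tree' G.R} (h : IsSucc G cost X p p') (hq : G.GenFrom X q)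
    (hlt : costP cost p < costP cost q) : costP cost p' ≤ costP cost q :=
  le_of_not_gt fun hqp => h.2.2 q hq ⟨hlt, hqp⟩

theorem exists_isSucc_of_lt [Finite G.R] (hpos : ∀ r, 0 < cost r) {p q : Tree' G.R}
    (hq : G.GenFrom X q) (hlt : costP cost p < costP cost q) : ∃ p', IsSucc G cost X p p' := by
  set C := {q' | G.GenFrom X q' ∧ costP cost p < costP cost q' ∧ costP cost q' ≤ costP cost q}
  have hC : C.Finite := (finite_setOf_costP_le hpos _).subset fun q' hq' => hq'.2.2
  obtain ⟨p', ⟨hp', hlt', hle'⟩, hmin⟩ :=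
    Set.exists_min_image C (costP cost) hC ⟨q, hq, hlt, le_rfl⟩
  refine ⟨p', hp', hlt', fun p'' hp'' ⟨hlt'', hgt''⟩ => ?_⟩
  exact (hmin p'' ⟨hp'', hlt'', hgt''.le.trans hle'⟩).not_gt hgt''

end Grammar

theorem stmt13_general (G : TreeGrammar) [Fintype G.R] (cost : G.R → ℝ)
    (hpos : ∀ r, 0 < cost r) (X : G.Γ) (p pn : Tree' G.R)
    (hp : G.GenFrom X p) (hsub : IsSubtree pn p)
    (hsucc : ∃ pn' : Tree' G.R, IsSucc G cost (G.lhs pn.rootLabel) pn pn') :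
    (∃ p' : Tree' G.R, IsSucc G cost X p p') ∧
      ∀ p' pn' : Tree' G.R, IsSucc G cost X p p' →
        IsSucc G cost (G.lhs pn.rootLabel) pn pn' →
        costP cost p' - costP cost p ≤ costP cost pn' - costP cost pn := by
  obtain ⟨pn₀, hpn₀⟩ := hsucc
  obtain ⟨q₀, hq₀, hcost₀⟩ := hsub.exists_replace cost hp hpn₀.1
  refine ⟨exists_isSucc_of_lt hpos hq₀ (by linarith [hpn₀.2.1]), fun p' pn' hp' hpn' => ?_⟩
  obtain ⟨q, hq, hcost⟩ := hsub.exists_replace cost hp hpn'.1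
  have := hp'.costP_le hq (by linarith [hpn'.2.1])
  linarith

/-- if a subprogram `pn` of `p` (generated from `Y`) has a successor wrt
`Y`, then `p` has a successor wrt `X`, and the successor cost gap of `p` is at most
that of `pn`. -/
theorem stmt13 (G : TreeGrammar) [Fintype G.Γ] [Fintype G.R] (cost : G.R → ℝ)
    (hpos : ∀ r, 0 < cost r) (X : G.Γ) (p pn : Tree' G.R)
    (hp : G.GenFrom X p) (hsub : IsSubtree pn p)
    (hsucc : ∃ pn' : Tree' G.R, IsSucc G cost (G.lhs pn.rootLabel) pn pn') :
    (∃ p' : Tree' G.R, IsSucc G cost X p p') ∧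
      ∀ p' pn' : Tree' G.R, IsSucc G cost X p p' →
        IsSucc G cost (G.lhs pn.rootLabel) pn pn' →
        costP cost p' - costP cost p ≤ costP cost pn' - costP cost pn :=
  stmt13_general G cost hpos X p pn hp hsub hsucc
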